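/- Let F be a free R-module of rank n with dual bases e_1,…,e_n of F and ε_1,…,ε_n of F*, let e_n-top = e_1 ∧ … ∧ e_n, and let X : F → F* be R-linear with matrix (x_{ij}) in these bases (X(e_j) = Σ_i x_{ij} ε_i). Then for all indices i, j: ( ε_j ∧ (⋀^{n−1} X)(ε_i ⌟ e_top) ) ⌟ e_top = (−1)^{n(n−1)/2} · (adjugate X)_{ij}, where e_top = e_1 ∧ … ∧ e_n. -/

import Mathlib

/-! Contracting `e_top` by `ε_i` deletes `e_i` with sign `(-1)^i`, and `⋀X` sends the result to
`X e₁ ∧ ⋯ ∧ X eₙ` with `X e_i` omitted. The contraction of `e_top` by an `n`-form of `F*` is a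
determinant, up to the reversal sign `(-1)^(n(n-1)/2)`, by Laplace expansion along the last row.
Here the form is `ε_j ∧ ⋀X(…)`, so expanding once more along the row of `ε_j` leaves
`(-1)^(i+j)` times the minor of `x` without row `j` and column `i`: the `(i, j)` entry of
`adjugate x`. -/

open ExteriorAlgebra

set_option synthInstance.maxHeartbeats 1000000
set_option maxHeartbeats 2000000

noncomputable def extMap (R : Type*) [CommRing R] {M N : Type*} [AddCommGroup M] [AddCommGroup N]
    [Module R M] [Module R N] (f : M →ₗ[R] N) :
    ExteriorAlgebra R M →ₐ[R] ExteriorAlgebra R N :=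
  ExteriorAlgebra.lift R ⟨(ExteriorAlgebra.ι R).comp f, fun m => by
    simp [ExteriorAlgebra.ι_sq_zero (f m)]⟩

noncomputable def extContract (R : Type*) [CommRing R] {M : Type*} [AddCommGroup M] [Module R M] :
    ExteriorAlgebra R (Module.Dual R M) →ₐ[R] Module.End R (ExteriorAlgebra R M) :=
  ExteriorAlgebra.lift R ⟨(CliffordAlgebra.contractLeft (Q := (0 : QuadraticForm R M)) :
      Module.Dual R M →ₗ[R] Module.End R (ExteriorAlgebra R M)), fun d => by
    refine LinearMap.ext fun x => ?_
    rw [Module.End.mul_apply, LinearMap.zero_apply]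
    exact CliffordAlgebra.contractLeft_contractLeft (Q := (0 : QuadraticForm R M)) (d := d) x⟩

noncomputable def extContractD (R : Type*) [CommRing R] {M : Type*} [AddCommGroup M] [Module R M] :
    ExteriorAlgebra R M →ₐ[R] Module.End R (ExteriorAlgebra R (Module.Dual R M)) :=
  ExteriorAlgebra.lift R ⟨(CliffordAlgebra.contractLeft
      (Q := (0 : QuadraticForm R (Module.Dual R M))) :
      Module.Dual R (Module.Dual R M) →ₗ[R] _).comp (Module.Dual.eval R M), fun m => by
    refine LinearMap.ext fun x => ?_
    rw [Module.End.mul_apply, LinearMap.zero_apply, LinearMap.comp_apply]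
    exact CliffordAlgebra.contractLeft_contractLeft
      (Q := (0 : QuadraticForm R (Module.Dual R M))) (d := Module.Dual.eval R M m) x⟩

def extDeg (R : Type*) [CommRing R] {M : Type*} [AddCommGroup M] [Module R M] (i : ℕ)
    (x : ExteriorAlgebra R M) : Prop :=
  x ∈ (LinearMap.range (ExteriorAlgebra.ι R : M →ₗ[R] ExteriorAlgebra R M)) ^ i

section Contraction

variable {R M : Type*} [CommRing R] [AddCommGroup M] [Module R M]

local notation "contract" => CliffordAlgebra.contractLeft (Q := (0 : QuadraticForm R M))

lemma ιMulti_snoc (n : ℕ) (v : Fin (n + 1) → M) :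
    ιMulti R (n + 1) v = ιMulti R n (Fin.init v) * ι R (v (Fin.last n)) := by
  rw [ιMulti_apply, ιMulti_apply, List.ofFn_succ', List.concat_eq_append, List.prod_append,
    List.prod_singleton]
  rfl

lemma ι_mul_ιMulti (n : ℕ) (a : M) (w : Fin n → M) :
    ι R a * ιMulti R n w = ιMulti R (n + 1) (Fin.cons a w) := by
  simp [ιMulti_succ_apply, Matrix.vecTail, Function.comp_def]

lemma contractLeft_ιMulti (f : Module.Dual R M) (n : ℕ) (v : Fin (n + 1) → M) :
    contract f (ιMulti R (n + 1) v)
      = ∑ k : Fin (n + 1), ((-1 : R) ^ (k : ℕ) * f (v k)) • ιMulti R n (v ∘ k.succAbove) := by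
  induction n with
  | zero => simp [CliffordAlgebra.contractLeft_ι, Algebra.algebraMap_eq_smul_one]
  | succ m ih =>
    have hsucc (k : Fin (m + 1)) : ιMulti R (m + 1) (v ∘ k.succ.succAbove)
        = ι R (v 0) * ιMulti R m (Fin.tail v ∘ k.succAbove) := by
      rw [ι_mul_ιMulti]
      congr 1
      ext a
      refine Fin.cases ?_ (fun a => ?_) a <;> simp [Fin.succ_succAbove_succ, Fin.tail]
    rw [ιMulti_succ_apply, CliffordAlgebra.contractLeft_ι_mul, Fin.sum_univ_succ]
    simp_rw [hsucc, Fin.val_succ, pow_succ, ← mul_smul_comm, Matrix.vecTail]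
    rw [ih, Finset.mul_sum]
    simp only [Fin.val_zero, pow_zero, one_mul, Fin.succAbove_zero, Fin.tail, Function.comp_def]
    rw [sub_eq_add_neg, ← Finset.sum_neg_distrib]
    congr 1
    refine Finset.sum_congr rfl fun k _ => ?_
    rw [mul_neg_one, neg_mul, neg_smul, mul_neg]

lemma contractLeft_dualBasis_ιMulti {m : ℕ} (b : Module.Basis (Fin (m + 1)) R M)
    (i : Fin (m + 1)) :
    contract (b.dualBasis i) (ιMulti R (m + 1) b)
      = (-1 : R) ^ (i : ℕ) • ιMulti R m (b ∘ i.succAbove) := by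
  rw [contractLeft_ιMulti, Fintype.sum_eq_single i fun k hk => by simp [hk]]
  simp

lemma extContract_ι (d : Module.Dual R M) : extContract R (ι R d) = contract d :=
  ExteriorAlgebra.lift_ι_apply R _ _ d

-- The sign is that of reversing `n` letters: contraction by `w₀ ∧ ⋯ ∧ wₙ₋₁` applies `wₙ₋₁` first.
lemma extContract_ιMulti_ιMulti (n : ℕ) (w : Fin n → Module.Dual R M) (v : Fin n → M) :
    extContract R (ιMulti R n w) (ιMulti R n v)
      = algebraMap R _ ((-1 : R) ^ (n * (n - 1) / 2) * (Matrix.of fun a b => w a (v b)).det) := by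
  induction n with
  | zero => simp
  | succ n ih =>
    rw [ιMulti_snoc, map_mul, Module.End.mul_apply, extContract_ι, contractLeft_ιMulti, map_sum]
    simp_rw [LinearMap.map_smul, ih, Algebra.smul_def, ← map_mul, ← map_sum]
    congr 1
    rw [Matrix.det_succ_row _ (Fin.last n), Nat.triangle_succ, Finset.mul_sum]
    refine Finset.sum_congr rfl fun k _ => ?_
    have hminor : (Matrix.of fun a b => Fin.init w a ((v ∘ k.succAbove) b))
        = (Matrix.of fun a b => w a (v b)).submatrix (Fin.last n).succAbove k.succAbove := by
      ext a b
      simp [Fin.init, Fin.succAbove_last]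
    rw [hminor, Fin.val_last, pow_add, pow_add]
    simp only [Matrix.of_apply]
    ring_nf
    rw [pow_mul', neg_one_sq, one_pow, mul_one]

end Contraction

section Functoriality

variable {R M N : Type*} [CommRing R] [AddCommGroup M] [AddCommGroup N] [Module R M] [Module R N]

lemma extMap_eq_map (f : M →ₗ[R] N) : extMap R f = ExteriorAlgebra.map f :=
  ExteriorAlgebra.hom_ext <| LinearMap.ext fun m => by simp [extMap]

lemma extMap_ιMulti (f : M →ₗ[R] N) (n : ℕ) (v : Fin n → M) :
    extMap R f (ιMulti R n v) = ιMulti R n (f ∘ v) := by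
  rw [extMap_eq_map, map_apply_ιMulti]

end Functoriality

lemma Matrix.det_eq_of_row_zero_eq_single {R : Type*} [CommRing R] {m : ℕ}
    (A : Matrix (Fin (m + 1)) (Fin (m + 1)) R) (j : Fin (m + 1)) (hA : A 0 = Pi.single j 1) :
    A.det = (-1) ^ (j : ℕ) * (A.submatrix Fin.succ j.succAbove).det := by
  rw [Matrix.det_succ_row_zero, Fintype.sum_eq_single j fun k hk => by simp [hA, hk]]
  simp [hA]

lemma det_pairing_cons_dualBasis {R F : Type*} [CommRing R] [AddCommGroup F] [Module R F] {m : ℕ}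
    (e : Module.Basis (Fin (m + 1)) R F) (x : Matrix (Fin (m + 1)) (Fin (m + 1)) R)
    (X : F →ₗ[R] Module.Dual R F) (hX : ∀ j, X (e j) = ∑ i, x i j • e.dualBasis i)
    (i j : Fin (m + 1)) :
    (Matrix.of fun a b =>
        (Fin.cons (e.dualBasis j) (X ∘ e ∘ i.succAbove) : Fin (m + 1) → Module.Dual R F) a (e b)).det
      = (-1) ^ (j : ℕ) * (x.submatrix j.succAbove i.succAbove).det := by
  have hrow : (Matrix.of fun a b =>
      (Fin.cons (e.dualBasis j) (X ∘ e ∘ i.succAbove) : Fin (m + 1) → Module.Dual R F) a (e b)) 0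
      = Pi.single j 1 := funext fun b => by simp [Pi.single_apply, Finsupp.single_apply, eq_comm]
  rw [Matrix.det_eq_of_row_zero_eq_single _ j hrow, ← Matrix.det_transpose (x.submatrix _ _)]
  congr 2
  ext a b
  simp [hX, Finsupp.single_apply]

theorem contraction_adjugate_entry_general (R : Type*) [CommRing R]
    (F : Type*) [AddCommGroup F] [Module R F]
    (n : ℕ) (e : Module.Basis (Fin n) R F)
    (x : Matrix (Fin n) (Fin n) R) (X : F →ₗ[R] Module.Dual R F)
    (hX : ∀ j, X (e j) = ∑ i, x i j • e.dualBasis i) (i j : Fin n) :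
    extContract R
        (ExteriorAlgebra.ι R (e.dualBasis j) *
          extMap R X
            (extContract R (ExteriorAlgebra.ι R (e.dualBasis i))
              (ExteriorAlgebra.ιMulti R n (fun k => e k))))
        (ExteriorAlgebra.ιMulti R n (fun k => e k)) =
      algebraMap R (ExteriorAlgebra R F)
        ((-1 : R) ^ (n * (n - 1) / 2) * x.adjugate i j) := by
  cases n with
  | zero => exact i.elim0
  | succ m =>
    rw [extContract_ι, contractLeft_dualBasis_ιMulti, map_smul, extMap_ιMulti, mul_smul_comm,
      ι_mul_ιMulti, map_smul, LinearMap.smul_apply, extContract_ιMulti_ιMulti,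
      det_pairing_cons_dualBasis e x X hX, Matrix.adjugate_fin_succ_eq_det_submatrix,
      Algebra.smul_def, ← map_mul]
    congr 1
    rw [Nat.add_sub_cancel, pow_add]
    ring

/-- Lemma 1.10: with dual bases `e` of `F` and `ε = e.dualBasis` of `F*`,
`e_top = e₁ ∧ ⋯ ∧ eₙ`, and `X : F → F*` with matrix `x` (so `X(e_j) = Σ_i x i j • ε i`),
one has `(ε_j ∧ (⋀^(n-1) X)(ε_i ⌟ e_top)) ⌟ e_top = (-1)^(n(n-1)/2) • (adjugate x) i j`. -/
theorem contraction_adjugate_entry (R : Type*) [CommRing R]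
    (F : Type*) [AddCommGroup F] [Module R F]
    (n : ℕ) (hn : 2 ≤ n) (e : Module.Basis (Fin n) R F)
    (x : Matrix (Fin n) (Fin n) R) (X : F →ₗ[R] Module.Dual R F)
    (hX : ∀ j, X (e j) = ∑ i, x i j • e.dualBasis i) (i j : Fin n) :
    extContract R
        (ExteriorAlgebra.ι R (e.dualBasis j) *
          extMap R X
            (extContract R (ExteriorAlgebra.ι R (e.dualBasis i))
              (ExteriorAlgebra.ιMulti R n (fun k => e k))))
        (ExteriorAlgebra.ιMulti R n (fun k => e k)) =
      algebraMap R (ExteriorAlgebra R F)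
        ((-1 : R) ^ (n * (n - 1) / 2) * x.adjugate i j) :=
  contraction_adjugate_entry_general R F n e x X hX i j
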